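/- arXiv:gr-qc/0004033 — 2 statements merged into one kernel-verified Lean document; each statement's English description precedes it below -/
import Mathlib

section
/- Let $a>0$. Let $A, B : \mathbb{R} \to \mathbb{R}$ be even functions ($A_{-k}=A_k$, $B_{-k}=B_k$) with $A_k^2 - B_k^2 = 1$ for all $k$. Let $\alpha, \beta : \mathbb{R}\times\mathbb{R} \to \mathbb{C}$ satisfy the symmetry relations $\overline{\alpha_{lk}} = \alpha_{-l\,-k}$ and $\overline{\beta_{lk}} = \beta_{-l\,-k}$ for all $l,k$. Define the transformed coefficients $\tilde{\alpha}_{lk} := (A_lA_k - B_lB_k)\,\alpha_{lk} + (B_lA_k - A_lB_k)\,\overline{\beta_{-l\,k}}$ and $\tilde{\beta}_{lk} := (A_lA_k - B_lB_k)\,\beta_{lk} + (B_lA_k - A_lB_k)\,\alpha_{l\,-k}$. Then $\alpha_{lk} = e^{\pi l/a}\,\overline{\beta_{lk}}$ holds for all $l,k$ if and only if $\tilde{\alpha}_{lk} = e^{\pi l/a}\,\overline{\tilde{\beta}_{lk}}$ holds for all $l,k$. -/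
private lemma fwd_aux (a : ℝ)
    (α β α' β' : ℝ → ℝ → ℂ)
    (hα : ∀ l k, (starRingEnd ℂ) (α l k) = α (-l) (-k))
    (C D : ℝ → ℝ → ℝ)
    (hα' : ∀ l k, α' l k =
      ((C l k : ℝ) : ℂ) * α l k + ((D l k : ℝ) : ℂ) * (starRingEnd ℂ) (β (-l) k))
    (hβ' : ∀ l k, β' l k =
      ((C l k : ℝ) : ℂ) * β l k + ((D l k : ℝ) : ℂ) * α l (-k))
    (hP : ∀ l k, α l k = ((Real.exp (Real.pi * l / a) : ℝ) : ℂ) * (starRingEnd ℂ) (β l k)) :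
    ∀ l k, α' l k = ((Real.exp (Real.pi * l / a) : ℝ) : ℂ) * (starRingEnd ℂ) (β' l k) := by
  intro l k
  have hE : ((Real.exp (Real.pi * l / a) : ℝ) : ℂ) *
      ((Real.exp (Real.pi * (-l) / a) : ℝ) : ℂ) = 1 := by
    rw [← Complex.ofReal_mul, ← Real.exp_add,
      show Real.pi * l / a + Real.pi * (-l) / a = 0 by ring, Real.exp_zero,
      Complex.ofReal_one]
  have key : (starRingEnd ℂ) (β (-l) k) =
      ((Real.exp (Real.pi * l / a) : ℝ) : ℂ) * (starRingEnd ℂ) (α l (-k)) := by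
    have h1 := hP (-l) k
    have h2 := hα l (-k)
    simp only [neg_neg] at h2
    rw [← h2] at h1
    calc (starRingEnd ℂ) (β (-l) k)
        = 1 * (starRingEnd ℂ) (β (-l) k) := (one_mul _).symm
      _ = ((Real.exp (Real.pi * l / a) : ℝ) : ℂ) *
          (((Real.exp (Real.pi * (-l) / a) : ℝ) : ℂ) * (starRingEnd ℂ) (β (-l) k)) := by
          rw [← hE]; ring
      _ = ((Real.exp (Real.pi * l / a) : ℝ) : ℂ) * (starRingEnd ℂ) (α l (-k)) := by
          rw [← h1]
  rw [hα' l k, hβ' l k, map_add, map_mul, map_mul, Complex.conj_ofReal,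
    Complex.conj_ofReal, hP l k, key]
  ring

/-- Property P (`α_{lk} = e^{πl/a} conj β_{lk}`), from which the thermal Unruh
spectrum follows, is invariant under a generalized plane wave (Bogolubov)
transformation with even coefficients `A, B` satisfying `A_k² - B_k² = 1`. -/
theorem propertyP_invariance (a : ℝ) (ha : 0 < a)
    (A B : ℝ → ℝ)
    (hA : ∀ k, A (-k) = A k) (hB : ∀ k, B (-k) = B k)
    (hAB : ∀ k, A k ^ 2 - B k ^ 2 = 1)
    (α β : ℝ → ℝ → ℂ)
    (hα : ∀ l k, (starRingEnd ℂ) (α l k) = α (-l) (-k))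
    (hβ : ∀ l k, (starRingEnd ℂ) (β l k) = β (-l) (-k))
    (α' β' : ℝ → ℝ → ℂ)
    (hα' : ∀ l k, α' l k =
      ((A l * A k - B l * B k : ℝ) : ℂ) * α l k +
      ((B l * A k - A l * B k : ℝ) : ℂ) * (starRingEnd ℂ) (β (-l) k))
    (hβ' : ∀ l k, β' l k =
      ((A l * A k - B l * B k : ℝ) : ℂ) * β l k +
      ((B l * A k - A l * B k : ℝ) : ℂ) * α l (-k)) :
    (∀ l k, α l k = ((Real.exp (Real.pi * l / a) : ℝ) : ℂ) * (starRingEnd ℂ) (β l k)) ↔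
    (∀ l k, α' l k = ((Real.exp (Real.pi * l / a) : ℝ) : ℂ) * (starRingEnd ℂ) (β' l k)) := by
  -- symmetry of the transformed α'
  have hα's : ∀ l k, (starRingEnd ℂ) (α' l k) = α' (-l) (-k) := by
    intro l k
    have h1 : β (-l) k = (starRingEnd ℂ) (β l (-k)) := by rw [hβ l (-k), neg_neg]
    rw [hα' l k, hα' (-l) (-k), map_add, map_mul, map_mul, Complex.conj_ofReal,
      Complex.conj_ofReal, hα l k, hA, hB, hA, hB, neg_neg, h1, Complex.conj_conj]
  -- determinant identity, over ℂ
  have hdet : ∀ l k : ℝ, (((A l * A k - B l * B k) ^ 2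
      - (B l * A k - A l * B k) ^ 2 : ℝ) : ℂ) = 1 := by
    intro l k
    have : (A l * A k - B l * B k) ^ 2 - (B l * A k - A l * B k) ^ 2 = 1 := by
      nlinarith [hAB l, hAB k]
    rw [this]; norm_num
  -- inverse transformation: α expressed from α', β'
  have hαinv : ∀ l k, α l k =
      ((A l * A k - B l * B k : ℝ) : ℂ) * α' l k +
      ((-(B l * A k - A l * B k) : ℝ) : ℂ) * (starRingEnd ℂ) (β' (-l) k) := by
    intro l k
    have hb : (starRingEnd ℂ) (β' (-l) k) =
        ((A l * A k - B l * B k : ℝ) : ℂ) * (starRingEnd ℂ) (β (-l) k) +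
        ((B l * A k - A l * B k : ℝ) : ℂ) * α l k := by
      have h2 : (starRingEnd ℂ) (α (-l) (-k)) = α l k := by
        rw [← hα l k, Complex.conj_conj]
      rw [hβ' (-l) k, map_add, map_mul, map_mul, Complex.conj_ofReal, Complex.conj_ofReal,
        hA, hB, h2]
    have hc := hdet l k
    rw [hb, hα' l k]
    push_cast at hc ⊢
    linear_combination (-(α l k)) * hc
  -- inverse transformation: β expressed from α', β'
  have hβinv : ∀ l k, β l k =
      ((A l * A k - B l * B k : ℝ) : ℂ) * β' l k +
      ((-(B l * A k - A l * B k) : ℝ) : ℂ) * α' l (-k) := by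
    intro l k
    have ha' : α' l (-k) =
        ((A l * A k - B l * B k : ℝ) : ℂ) * α l (-k) +
        ((B l * A k - A l * B k : ℝ) : ℂ) * β l k := by
      rw [hα' l (-k), hA, hB, ← hβ l k, Complex.conj_conj]
    have hc := hdet l k
    rw [ha', hβ' l k]
    push_cast at hc ⊢
    linear_combination (-(β l k)) * hc
  constructor
  · intro h
    exact fwd_aux a α β α' β' hα
      (fun l k => A l * A k - B l * B k) (fun l k => B l * A k - A l * B k) hα' hβ' h
  · intro h
    exact fwd_aux a α' β' α β hα's
      (fun l k => A l * A k - B l * B k) (fun l k => -(B l * A k - A l * B k))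
      hαinv hβinv h
end

section
/- Let $m \geq 0$ and $k \in \mathbb{R}$ with $\omega_k = \sqrt{k^2+m^2} > 0$. Then for all $(t,x) \in \mathbb{R}^2$, the pseudo plane wave $V_k(t,x) = \tfrac{1}{2\sqrt{\pi}}\, e^{ikx}\big(\cos(\omega_k t) - \tfrac{i}{\omega_k}\sin(\omega_k t)\big)$ satisfies $V_k(t,x) = \tfrac{\omega_k+1}{2\sqrt{\omega_k}}\, U_k(t,x) + \tfrac{\omega_k-1}{2\sqrt{\omega_k}}\, \overline{U_{-k}(t,x)}$, where $U_k(t,x) = \tfrac{1}{\sqrt{4\pi\omega_k}}\, e^{i(kx - \omega_k t)}$; moreover the coefficients $A_k = \tfrac{\omega_k+1}{2\sqrt{\omega_k}}$ and $B_k = \tfrac{\omega_k-1}{2\sqrt{\omega_k}}$ satisfy $A_k^2 - B_k^2 = 1$. -/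
/-- The plane wave mode `U_k(t,x) = (1/√(4πω_k)) e^{i(kx - ω_k t)}` with
`ω_k = √(k² + m²)`. -/
noncomputable def planeWave (m k : ℝ) (t x : ℝ) : ℂ :=
  ((1 / Real.sqrt (4 * Real.pi * Real.sqrt (k ^ 2 + m ^ 2)) : ℝ) : ℂ) *
    Complex.exp (Complex.I * ((k * x - Real.sqrt (k ^ 2 + m ^ 2) * t : ℝ) : ℂ))

/-- The pseudo plane wave mode
`V_k(t,x) = (1/(2√π)) e^{ikx} (cos(ω_k t) - (i/ω_k) sin(ω_k t))`. -/
noncomputable def pseudoPlaneWave (m k : ℝ) (t x : ℝ) : ℂ :=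
  ((1 / (2 * Real.sqrt Real.pi) : ℝ) : ℂ) * Complex.exp (Complex.I * ((k * x : ℝ) : ℂ)) *
    (((Real.cos (Real.sqrt (k ^ 2 + m ^ 2) * t) : ℝ) : ℂ) -
      Complex.I / ((Real.sqrt (k ^ 2 + m ^ 2) : ℝ) : ℂ) *
        ((Real.sin (Real.sqrt (k ^ 2 + m ^ 2) * t) : ℝ) : ℂ))

/-- The pseudo plane waves are a generalized plane wave (Bogolubov) transform
of the plane waves:
`V_k = ((ω_k+1)/(2√ω_k)) U_k + ((ω_k-1)/(2√ω_k)) conj U_{-k}`, with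
coefficients `A_k, B_k` satisfying `A_k² - B_k² = 1`. -/
theorem pseudoPlaneWave_eq_bogolubov_planeWave (m k : ℝ) (hm : 0 ≤ m)
    (hω : 0 < Real.sqrt (k ^ 2 + m ^ 2)) :
    (∀ t x : ℝ,
      pseudoPlaneWave m k t x =
        (((Real.sqrt (k ^ 2 + m ^ 2) + 1) / (2 * Real.sqrt (Real.sqrt (k ^ 2 + m ^ 2))) : ℝ) : ℂ) *
          planeWave m k t x +
        (((Real.sqrt (k ^ 2 + m ^ 2) - 1) / (2 * Real.sqrt (Real.sqrt (k ^ 2 + m ^ 2))) : ℝ) : ℂ) *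
          (starRingEnd ℂ) (planeWave m (-k) t x)) ∧
    ((Real.sqrt (k ^ 2 + m ^ 2) + 1) / (2 * Real.sqrt (Real.sqrt (k ^ 2 + m ^ 2)))) ^ 2 -
      ((Real.sqrt (k ^ 2 + m ^ 2) - 1) / (2 * Real.sqrt (Real.sqrt (k ^ 2 + m ^ 2)))) ^ 2 = 1 := by
  set ω := Real.sqrt (k ^ 2 + m ^ 2) with hωdef
  set s := Real.sqrt ω with hsdef
  have hs : 0 < s := Real.sqrt_pos.mpr hω
  have hs2 : s ^ 2 = ω := Real.sq_sqrt hω.le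
  have hπ : 0 < Real.sqrt Real.pi := Real.sqrt_pos.mpr Real.pi_pos
  have hnorm : Real.sqrt (4 * Real.pi * ω) = 2 * Real.sqrt Real.pi * s := by
    rw [Real.sqrt_mul (by positivity), Real.sqrt_mul (by norm_num : (0:ℝ) ≤ 4)]
    rw [show (4:ℝ) = 2 ^ 2 by norm_num, Real.sqrt_sq (by norm_num : (0:ℝ) ≤ 2)]
  constructor
  · intro t x
    unfold pseudoPlaneWave planeWave
    rw [show ((-k) ^ 2 + m ^ 2) = (k ^ 2 + m ^ 2) by ring]
    rw [← hωdef, hnorm]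
    have hconj : (starRingEnd ℂ)
        (((1 / (2 * Real.sqrt Real.pi * s) : ℝ) : ℂ) *
          Complex.exp (Complex.I * ((-k * x - ω * t : ℝ) : ℂ))) =
        ((1 / (2 * Real.sqrt Real.pi * s) : ℝ) : ℂ) *
          Complex.exp (Complex.I * ((k * x + ω * t : ℝ) : ℂ)) := by
      rw [map_mul, Complex.conj_ofReal, ← Complex.exp_conj]
      congr 2
      simp [Complex.ofReal_sub, Complex.ofReal_neg, Complex.ofReal_add, Complex.ofReal_mul]
      ring
    rw [hconj]
    have hcos : ((Real.cos (ω * t) : ℝ) : ℂ) =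
        (Complex.exp (Complex.I * (ω * t : ℝ)) + Complex.exp (-(Complex.I * (ω * t : ℝ)))) / 2 := by
      rw [Complex.ofReal_cos, Complex.cos]
      ring_nf
    have hωC : ((ω : ℝ) : ℂ) ≠ 0 := by exact_mod_cast hω.ne'
    have hsin : Complex.I / ((ω : ℝ) : ℂ) * ((Real.sin (ω * t) : ℝ) : ℂ) =
        (Complex.exp (Complex.I * (ω * t : ℝ)) - Complex.exp (-(Complex.I * (ω * t : ℝ)))) /
          (2 * ((ω : ℝ) : ℂ)) := by
      rw [Complex.ofReal_sin, Complex.sin]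
      field_simp
      ring_nf
      rw [Complex.I_sq]
      ring
    rw [hcos, hsin]
    have he1 : Complex.exp (Complex.I * ((k * x - ω * t : ℝ) : ℂ)) =
        Complex.exp (Complex.I * ((k * x : ℝ) : ℂ)) *
          Complex.exp (-(Complex.I * ((ω * t : ℝ) : ℂ))) := by
      rw [← Complex.exp_add]; congr 1; push_cast; ring
    have he2 : Complex.exp (Complex.I * ((k * x + ω * t : ℝ) : ℂ)) =
        Complex.exp (Complex.I * ((k * x : ℝ) : ℂ)) *
          Complex.exp (Complex.I * ((ω * t : ℝ) : ℂ)) := by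
      rw [← Complex.exp_add]; congr 1; push_cast; ring
    rw [he1, he2]
    have hsC : ((s : ℝ) : ℂ) ≠ 0 := by exact_mod_cast hs.ne'
    have hπC : ((Real.sqrt Real.pi : ℝ) : ℂ) ≠ 0 := by exact_mod_cast hπ.ne'
    have hs2C : ((s : ℝ) : ℂ) ^ 2 = ((ω : ℝ) : ℂ) := by exact_mod_cast hs2
    push_cast
    rw [← hs2C]
    field_simp [hsC, hπC]
    ring
  · have : ((ω + 1) / (2 * s)) ^ 2 - ((ω - 1) / (2 * s)) ^ 2 =
        ((ω + 1) ^ 2 - (ω - 1) ^ 2) / (4 * s ^ 2) := by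
      rw [div_pow, div_pow, ← sub_div]
      congr 1
      ring
    rw [this, hs2]
    rw [show ((ω + 1) ^ 2 - (ω - 1) ^ 2) = 4 * ω by ring]
    exact div_self (by positivity)
end
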